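/- arXiv:2602.09711 — 3 statements merged into one kernel-verified Lean document; each statement's English description precedes it below -/
import Mathlib

section
/- Let (X^n, Y^n) be jointly distributed random sequences with finite alphabets. The directed information has the Kullback–Leibler divergence representation I(X^n→Y^n) = D(P_{X^n,Y^n} ‖ P_{X^n‖Y^{n-1}} · P_{Y^n}), where the second argument is the pmf (x^n,y^n) ↦ P(x^n‖y^{n-1}) · P(y^n). -/
open Finset

noncomputable section

-- Probability of the event `E` under the pmf `p` on a finite sample space `Ω`.
open Classical in
def pr {Ω : Type*} [Fintype Ω] (p : Ω → ℝ) (E : Ω → Prop) : ℝ :=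
  ∑ ω, if E ω then p ω else 0

-- Shannon entropy `H(U)` (pointwise form).
def entropy {Ω α : Type*} [Fintype Ω] (p : Ω → ℝ) (U : Ω → α) : ℝ :=
  -∑ ω, p ω * Real.log (pr p (fun ω' => U ω' = U ω))

-- Conditional Shannon entropy `H(U | V)`.
def condEntropy {Ω α β : Type*} [Fintype Ω] (p : Ω → ℝ) (U : Ω → α) (V : Ω → β) : ℝ :=
  -∑ ω, p ω * Real.log
      (pr p (fun ω' => U ω' = U ω ∧ V ω' = V ω) / pr p (fun ω' => V ω' = V ω))

-- Mutual information `I(U ; V)`.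
def mutualInfo {Ω α β : Type*} [Fintype Ω] (p : Ω → ℝ) (U : Ω → α) (V : Ω → β) : ℝ :=
  ∑ ω, p ω * Real.log
      (pr p (fun ω' => U ω' = U ω ∧ V ω' = V ω) /
        (pr p (fun ω' => U ω' = U ω) * pr p (fun ω' => V ω' = V ω)))

-- Conditional mutual information `I(U ; V | W)`.
def condMutualInfo {Ω α β γ : Type*} [Fintype Ω] (p : Ω → ℝ)
    (U : Ω → α) (V : Ω → β) (W : Ω → γ) : ℝ :=
  ∑ ω, p ω * Real.log
      ((pr p (fun ω' => U ω' = U ω ∧ V ω' = V ω ∧ W ω' = W ω) *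
          pr p (fun ω' => W ω' = W ω)) /
        (pr p (fun ω' => U ω' = U ω ∧ W ω' = W ω) *
          pr p (fun ω' => V ω' = V ω ∧ W ω' = W ω)))

-- The prefix `(X_0, …, X_{i-1})` of a random sequence `X`.
def prefixSeq {Ω 𝒳 : Type*} (X : Ω → ℕ → 𝒳) (i : ℕ) : Ω → (Fin i → 𝒳) :=
  fun ω j => X ω (j : ℕ)

-- Directed information `I(X^n → Y^n) = ∑_{i=1}^n I(X^i ; Y_i | Y^{i-1})` (0-indexed).
def directedInfo {Ω 𝒳 𝒴 : Type*} [Fintype Ω] (p : Ω → ℝ)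
    (X : Ω → ℕ → 𝒳) (Y : Ω → ℕ → 𝒴) (n : ℕ) : ℝ :=
  ∑ i ∈ Finset.range n,
    condMutualInfo p (prefixSeq X (i + 1)) (fun ω => Y ω i) (prefixSeq Y i)

/-! Per outcome ω of positive probability, the log-ratio in `I(X^{i+1} ; Y_i | Y^i)` is
`log (P(x^{i+1}, y^{i+1}) P(y^i) / (P(x^{i+1}, y^i) P(y^{i+1})))`, and the product of these ratios
over `i < n` telescopes. The factors `P(y^i) / P(y^{i+1})` leave `P(y^0) / P(y^n)`; writing
`P(x^{i+1}, y^{i+1}) / P(x^{i+1}, y^i)` as `P(x^{i+1}, y^{i+1}) / P(x^i, y^i)` divided by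
`P(x^{i+1}, y^i) / P(x^i, y^i)`, the remaining factors leave `P(x^n, y^n) / P(x^0, y^0)` divided by
the causally conditioned pmf. The two empty-prefix probabilities are both the total mass. -/

lemma pr_congr {Ω : Type*} [Fintype Ω] (p : Ω → ℝ) {E F : Ω → Prop} (h : ∀ ω, E ω ↔ F ω) :
    pr p E = pr p F :=
  congrArg (pr p) (funext fun ω => propext (h ω))

lemma pr_pos {Ω : Type*} [Fintype Ω] {p : Ω → ℝ} (hp0 : ∀ ω, 0 ≤ p ω)
    {E : Ω → Prop} {ω : Ω} (hE : E ω) (hω : 0 < p ω) : 0 < pr p E := by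
  refine sum_pos' (fun ω' _ => ?_) ⟨ω, mem_univ ω, by simpa [hE] using hω⟩
  split <;> simp [hp0 ω']

lemma prefixSeq_succ_eq_iff {Ω 𝒴 : Type*} (Y : Ω → ℕ → 𝒴) (i : ℕ) (ω' ω : Ω) :
    prefixSeq Y (i + 1) ω' = prefixSeq Y (i + 1) ω ↔
      Y ω' i = Y ω i ∧ prefixSeq Y i ω' = prefixSeq Y i ω := by
  simp only [funext_iff, prefixSeq, Fin.forall_fin_succ', Fin.val_castSucc, Fin.val_last]
  exact and_comm

lemma prod_range_telescope {K : Type*} [Field K] (A B C : ℕ → K) (hA : ∀ i, A i ≠ 0)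
    (hB : ∀ i, B i ≠ 0) (hC : ∀ i, C i ≠ 0) (h0 : A 0 = B 0) (n : ℕ) :
    ∏ i ∈ range n, A (i + 1) * B i / (C i * B (i + 1)) =
      A n / ((∏ i ∈ range n, C i / A i) * B n) := by
  induction n with
  | zero => simp [h0, div_self (hB 0)]
  | succ n ih =>
    have hprod : ∏ i ∈ range n, C i / A i ≠ 0 :=
      prod_ne_zero_iff.2 fun i _ => div_ne_zero (hC i) (hA i)
    rw [prod_range_succ, prod_range_succ, ih]
    field_simp [hA, hB, hC, hprod]

lemma sum_log_range_telescope (A B C : ℕ → ℝ) (hA : ∀ i, A i ≠ 0) (hB : ∀ i, B i ≠ 0)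
    (hC : ∀ i, C i ≠ 0) (h0 : A 0 = B 0) (n : ℕ) :
    ∑ i ∈ range n, Real.log (A (i + 1) * B i / (C i * B (i + 1))) =
      Real.log (A n / ((∏ i ∈ range n, C i / A i) * B n)) := by
  rw [← Real.log_prod fun i _ => div_ne_zero (mul_ne_zero (hA _) (hB i)) (mul_ne_zero (hC i) (hB _)),
    prod_range_telescope A B C hA hB hC h0]

theorem directedInfo_eq_klDiv_general
    {Ω 𝒳 𝒴 : Type*} [Fintype Ω]
    (p : Ω → ℝ) (hp0 : ∀ ω, 0 ≤ p ω)
    (X : Ω → ℕ → 𝒳) (Y : Ω → ℕ → 𝒴) (n : ℕ) :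
    directedInfo p X Y n =
      ∑ ω, p ω * Real.log
          (pr p (fun ω' => prefixSeq X n ω' = prefixSeq X n ω ∧
                prefixSeq Y n ω' = prefixSeq Y n ω) /
            ((∏ i ∈ Finset.range n,
                pr p (fun ω' => prefixSeq X (i + 1) ω' = prefixSeq X (i + 1) ω ∧
                      prefixSeq Y i ω' = prefixSeq Y i ω) /
                  pr p (fun ω' => prefixSeq X i ω' = prefixSeq X i ω ∧
                        prefixSeq Y i ω' = prefixSeq Y i ω)) *
              pr p (fun ω' => prefixSeq Y n ω' = prefixSeq Y n ω))) := by
  unfold directedInfo condMutualInfo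
  rw [sum_comm]
  refine sum_congr rfl fun ω _ => ?_
  rcases (hp0 ω).eq_or_lt with hω | hω
  · simp [← hω]
  have hpos {E : Ω → Prop} (hE : E ω) : pr p E ≠ 0 := (pr_pos hp0 hE hω).ne'
  simp only [← prefixSeq_succ_eq_iff, ← mul_sum]
  congr 1
  refine sum_log_range_telescope
    (fun i => pr p fun ω' => prefixSeq X i ω' = prefixSeq X i ω ∧ prefixSeq Y i ω' = prefixSeq Y i ω)
    (fun i => pr p fun ω' => prefixSeq Y i ω' = prefixSeq Y i ω)
    (fun i => pr p fun ω' =>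
      prefixSeq X (i + 1) ω' = prefixSeq X (i + 1) ω ∧ prefixSeq Y i ω' = prefixSeq Y i ω)
    (fun i => hpos ⟨rfl, rfl⟩) (fun i => hpos rfl) (fun i => hpos ⟨rfl, rfl⟩)
    (pr_congr p fun ω' => ?_) n
  simp [Subsingleton.elim (prefixSeq X 0 ω') (prefixSeq X 0 ω)]

/-- the KL-divergence representation
`I(X^n→Y^n) = D(P_{X^n,Y^n} ‖ P_{X^n‖Y^{n-1}} · P_{Y^n})`, written here as the
expectation over the joint pmf of the corresponding log-likelihood ratio
(terms of zero probability contribute `0`). -/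
theorem directedInfo_eq_klDiv
    {Ω 𝒳 𝒴 : Type*} [Fintype Ω] [Fintype 𝒳] [Fintype 𝒴]
    (p : Ω → ℝ) (hp0 : ∀ ω, 0 ≤ p ω) (hp1 : ∑ ω, p ω = 1)
    (X : Ω → ℕ → 𝒳) (Y : Ω → ℕ → 𝒴) (n : ℕ) :
    directedInfo p X Y n =
      ∑ ω, p ω * Real.log
          (pr p (fun ω' => prefixSeq X n ω' = prefixSeq X n ω ∧
                prefixSeq Y n ω' = prefixSeq Y n ω) /
            ((∏ i ∈ Finset.range n,
                pr p (fun ω' => prefixSeq X (i + 1) ω' = prefixSeq X (i + 1) ω ∧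
                      prefixSeq Y i ω' = prefixSeq Y i ω) /
                  pr p (fun ω' => prefixSeq X i ω' = prefixSeq X i ω ∧
                        prefixSeq Y i ω' = prefixSeq Y i ω)) *
              pr p (fun ω' => prefixSeq Y n ω' = prefixSeq Y n ω))) :=
  directedInfo_eq_klDiv_general p hp0 X Y n
end
end

section
/- (Chain rule for setwise directed information) Let A_1,…,A_n be random variables with finite alphabets and joint pmf P, factorized along the time order as P(a^n) = ∏_{i=1}^n P(a_i | a^{i-1}). For S ⊆ {1,…,n} with complement T = S^c, define the interventional law P(a^T | do(a^S)) := ∏_{i∈T} P(a_i | a^{i-1}), where in a^{i-1} the coordinates indexed by S are fixed to the intervened values a^S, and define the setwise directed information I(A^T→A^S) := E[log ( P(A^T | A^S) / P(A^T | do(A^S)) )]. Then I(A^{S^c}→A^S) = Σ_{i∈S} I(A^{S^c ∩ {1,…,i-1}}; A_i | A^{S ∩ {1,…,i-1}}). -/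
open Finset

noncomputable section

/-!
Fix an outcome `ω` of positive probability and write `g U = P(A^U = A^U(ω))`. The `i`-th
conditional mutual information term contributes `log (g [0,i] · g S_{<i} / (g [0,i) · g S_{≤i}))`
at `ω`. Summed over `i ∈ S`, the first ratios together with the do-factors `g [0,i] / g [0,i)`,
`i ∉ S`, telescope to `g [0,n) / g ∅`, and the second ratios telescope to `g ∅ / g S`.
-/

def agreeOn {Ω : Type*} {𝒜 : ℕ → Type*} (A : (i : ℕ) → Ω → 𝒜 i) (ω : Ω) (U : Finset ℕ) :
    Ω → Prop :=
  fun ω' => ∀ j ∈ U, A j ω' = A j ω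

section agreeOn

variable {Ω : Type*} {𝒜 : ℕ → Type*} (A : (i : ℕ) → Ω → 𝒜 i) (ω ω' : Ω)

lemma agreeOn_union (U W : Finset ℕ) :
    agreeOn A ω (U ∪ W) ω' ↔ agreeOn A ω U ω' ∧ agreeOn A ω W ω' := by
  simp only [agreeOn, mem_union, or_imp, forall_and]

lemma agreeOn_insert (i : ℕ) (U : Finset ℕ) :
    agreeOn A ω (insert i U) ω' ↔ A i ω' = A i ω ∧ agreeOn A ω U ω' := by
  simp only [agreeOn, forall_mem_insert]

lemma restrict_eq_iff_agreeOn (U : Finset ℕ) :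
    ((fun j : {x // x ∈ U} => A j.1 ω') = fun j : {x // x ∈ U} => A j.1 ω) ↔
      agreeOn A ω U ω' := by
  simp [funext_iff, agreeOn]

lemma pr_agreeOn_pos [Fintype Ω] {p : Ω → ℝ} (hp0 : ∀ ω, 0 ≤ p ω) (hω : 0 < p ω)
    (U : Finset ℕ) : 0 < pr p (agreeOn A ω U) := by
  refine sum_pos' (fun ω' _ => ?_) ⟨ω, mem_univ ω, ?_⟩
  · split_ifs
    exacts [hp0 ω', le_rfl]
  · simpa [agreeOn] using hω

end agreeOn

lemma condMutualInfo_restrict {Ω : Type*} [Fintype Ω] {𝒜 : ℕ → Type*}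
    (p : Ω → ℝ) (A : (i : ℕ) → Ω → 𝒜 i) (U W : Finset ℕ) (i : ℕ) :
    condMutualInfo p (fun ω (j : {x // x ∈ U}) => A j.1 ω) (A i)
        (fun ω (j : {x // x ∈ W}) => A j.1 ω) =
      ∑ ω, p ω * Real.log
        (pr p (agreeOn A ω (insert i (U ∪ W))) * pr p (agreeOn A ω W) /
          (pr p (agreeOn A ω (U ∪ W)) * pr p (agreeOn A ω (insert i W)))) := by
  unfold condMutualInfo
  simp only [restrict_eq_iff_agreeOn]
  congr! 6 <;>
    exact funext fun ω' => propext <| by simp only [agreeOn_insert, agreeOn_union, and_left_comm]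

lemma sum_filter_lt_succ_sub {G : Type*} [AddCommGroup G] (f : Finset ℕ → G) {n : ℕ}
    {S : Finset ℕ} (hS : S ⊆ range n) :
    ∑ i ∈ S, (f (S.filter (· < i + 1)) - f (S.filter (· < i))) = f S - f ∅ := by
  have hoff : ∀ i ∈ range n, i ∉ S → f (S.filter (· < i + 1)) - f (S.filter (· < i)) = 0 :=
    fun i _ hi => sub_eq_zero.mpr <| congrArg f <| by ext j; simp only [mem_filter]; grind
  rw [sum_subset hS hoff, sum_range_sub (fun i => f (S.filter (· < i))),
    filter_true_of_mem fun i hi => mem_range.mp (hS hi), filter_false_of_mem fun i _ => by omega]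

theorem log_div_div_prod_eq_sum_log {g : Finset ℕ → ℝ} (hg : ∀ U, g U ≠ 0) {n : ℕ}
    {S : Finset ℕ} (hS : S ⊆ range n) :
    Real.log ((g (range n) / g S) / ∏ i ∈ range n \ S, g (range (i + 1)) / g (range i)) =
      ∑ i ∈ S, Real.log (g (range (i + 1)) * g (S.filter (· < i)) /
        (g (range i) * g (S.filter (· < i + 1)))) := by
  set h : Finset ℕ → ℝ := fun U => Real.log (g U)
  have hdiv : ∀ U V, g U / g V ≠ 0 := fun U V => div_ne_zero (hg U) (hg V)
  have hfull : ∑ i ∈ range n \ S, (h (range (i + 1)) - h (range i)) +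
      ∑ i ∈ S, (h (range (i + 1)) - h (range i)) = h (range n) - h ∅ := by
    rw [sum_sdiff hS, sum_range_sub (fun i => h (range i)), range_zero]
  have hpast := sum_filter_lt_succ_sub h hS
  calc Real.log ((g (range n) / g S) / ∏ i ∈ range n \ S, g (range (i + 1)) / g (range i))
      = h (range n) - h S - ∑ i ∈ range n \ S, (h (range (i + 1)) - h (range i)) := by
        rw [Real.log_div (hdiv _ _) (prod_ne_zero_iff.mpr fun _ _ => hdiv _ _),
          Real.log_div (hg _) (hg _), Real.log_prod fun _ _ => hdiv _ _]
        exact congrArg _ (sum_congr rfl fun _ _ => Real.log_div (hg _) (hg _))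
    _ = ∑ i ∈ S, (h (range (i + 1)) - h (range i)) -
          ∑ i ∈ S, (h (S.filter (· < i + 1)) - h (S.filter (· < i))) := by
        linarith
    _ = _ := by
        rw [← sum_sub_distrib]
        refine sum_congr rfl fun i _ => ?_
        rw [Real.log_div (mul_ne_zero (hg _) (hg _)) (mul_ne_zero (hg _) (hg _)),
          Real.log_mul (hg _) (hg _), Real.log_mul (hg _) (hg _)]
        ring

lemma sdiff_filter_union_filter_lt {n i : ℕ} {S : Finset ℕ} (hS : S ⊆ range n) (hi : i ≤ n) :
    (range n \ S).filter (· < i) ∪ S.filter (· < i) = range i := by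
  rw [← filter_union, sdiff_union_of_subset hS]
  ext j
  simp only [mem_filter, mem_range]
  omega

lemma insert_filter_lt {i : ℕ} {S : Finset ℕ} (hi : i ∈ S) :
    insert i (S.filter (· < i)) = S.filter (· < i + 1) := by
  ext j
  simp only [mem_insert, mem_filter]
  grind

lemma condMutualInfo_restrict_filter_lt {Ω : Type*} [Fintype Ω] {𝒜 : ℕ → Type*}
    (p : Ω → ℝ) (A : (i : ℕ) → Ω → 𝒜 i) {n i : ℕ} {S : Finset ℕ} (hS : S ⊆ range n)
    (hi : i ∈ S) :
    condMutualInfo p (fun ω (j : {x // x ∈ (range n \ S).filter (· < i)}) => A j.1 ω) (A i)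
        (fun ω (j : {x // x ∈ S.filter (· < i)}) => A j.1 ω) =
      ∑ ω, p ω * Real.log
        (pr p (agreeOn A ω (range (i + 1))) * pr p (agreeOn A ω (S.filter (· < i))) /
          (pr p (agreeOn A ω (range i)) * pr p (agreeOn A ω (S.filter (· < i + 1))))) := by
  rw [condMutualInfo_restrict, sdiff_filter_union_filter_lt hS (mem_range.mp (hS hi)).le,
    insert_filter_lt hi, range_add_one]

theorem setwise_directedInfo_chain_rule_general
    {Ω : Type*} [Fintype Ω] {𝒜 : ℕ → Type*}
    (p : Ω → ℝ) (hp0 : ∀ ω, 0 ≤ p ω)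
    (A : (i : ℕ) → Ω → 𝒜 i) (n : ℕ) (S : Finset ℕ) (hS : S ⊆ Finset.range n) :
    ∑ ω, p ω * Real.log
        ((pr p (fun ω' => ∀ i < n, A i ω' = A i ω) /
            pr p (fun ω' => ∀ i ∈ S, A i ω' = A i ω)) /
          ∏ i ∈ Finset.range n \ S,
            pr p (fun ω' => ∀ j ≤ i, A j ω' = A j ω) /
              pr p (fun ω' => ∀ j < i, A j ω' = A j ω)) =
      ∑ i ∈ S,
        condMutualInfo p
          (fun ω => fun j : {x // x ∈ (Finset.range n \ S).filter (· < i)} => A j.1 ω)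
          (A i)
          (fun ω => fun j : {x // x ∈ S.filter (· < i)} => A j.1 ω) := by
  rw [sum_congr rfl fun i hi => condMutualInfo_restrict_filter_lt p A hS hi, sum_comm]
  refine sum_congr rfl fun ω _ => ?_
  rw [← mul_sum]
  rcases (hp0 ω).eq_or_lt with h0 | hω
  · simp [← h0]
  rw [← log_div_div_prod_eq_sum_log (fun U => (pr_agreeOn_pos A ω hp0 hω U).ne') hS]
  unfold agreeOn
  simp only [mem_range, Nat.lt_add_one_iff]

/-- chain rule for setwise directed information: with `T = S^c`
inside `{1,…,n}`, the setwise directed information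
`I(A^{S^c}→A^S) = E[log(P(A^T | A^S) / P(A^T | do(A^S)))]` satisfies
`I(A^{S^c}→A^S) = Σ_{i∈S} I(A^{S^c_{<i}}; A_i | A^{S_{<i}})`. -/
theorem setwise_directedInfo_chain_rule
    {Ω : Type*} [Fintype Ω] {𝒜 : ℕ → Type*} [∀ i, Fintype (𝒜 i)]
    (p : Ω → ℝ) (hp0 : ∀ ω, 0 ≤ p ω) (hp1 : ∑ ω, p ω = 1)
    (A : (i : ℕ) → Ω → 𝒜 i) (n : ℕ) (S : Finset ℕ) (hS : S ⊆ Finset.range n) :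
    ∑ ω, p ω * Real.log
        ((pr p (fun ω' => ∀ i < n, A i ω' = A i ω) /
            pr p (fun ω' => ∀ i ∈ S, A i ω' = A i ω)) /
          ∏ i ∈ Finset.range n \ S,
            pr p (fun ω' => ∀ j ≤ i, A j ω' = A j ω) /
              pr p (fun ω' => ∀ j < i, A j ω' = A j ω)) =
      ∑ i ∈ S,
        condMutualInfo p
          (fun ω => fun j : {x // x ∈ (Finset.range n \ S).filter (· < i)} => A j.1 ω)
          (A i)
          (fun ω => fun j : {x // x ∈ S.filter (· < i)} => A j.1 ω) :=
  setwise_directedInfo_chain_rule_general p hp0 A n S hS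
end
end

section
/- (Closed form of the Ising-channel optimal average reward) The equation x^3 = (1−x)^4 has a unique solution a in the interval [0,1]; this a lies in (0,1), and it satisfies 2·H₂(a)/(a+3) = −(1/2)·log₂(a), where H₂(x) = −x·log₂(x) − (1−x)·log₂(1−x) is the binary entropy function. -/
/-! `x ↦ x ^ 3 - (1 - x) ^ 4` is strictly increasing on `[0, 1]`, from `-1` to `1`, so it has
exactly one zero `a` there, and `a ∉ {0, 1}`. Taking `log₂` of `a ^ 3 = (1 - a) ^ 4` gives
`log₂ (1 - a) = (3 / 4) log₂ a`, hence `H₂(a) = -((a + 3) / 4) log₂ a`. -/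

open Finset

noncomputable section

-- The binary entropy function, base 2 (with `logb 2 0 = 0`).
def binaryEntropy (x : ℝ) : ℝ :=
  -(x * Real.logb 2 x) - (1 - x) * Real.logb 2 (1 - x)

open Real

theorem strictMonoOn_pow_sub_one_sub_pow {m : ℕ} (hm : m ≠ 0) (n : ℕ) :
    StrictMonoOn (fun x : ℝ => x ^ m - (1 - x) ^ n) (Set.Icc 0 1) := by
  intro x hx y hy hxy
  have hm' : x ^ m < y ^ m := pow_lt_pow_left₀ hxy hx.1 hm
  have hn' : (1 - y) ^ n ≤ (1 - x) ^ n := pow_le_pow_left₀ (by linarith [hy.2]) (by linarith) n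
  dsimp only
  linarith

theorem existsUnique_mem_Icc_pow_eq_one_sub_pow {m : ℕ} (hm : m ≠ 0) (n : ℕ) :
    ∃! a : ℝ, a ∈ Set.Icc 0 1 ∧ a ^ m = (1 - a) ^ n := by
  obtain ⟨a, ha, hroot⟩ : ∃ a ∈ Set.Icc (0 : ℝ) 1, a ^ m - (1 - a) ^ n = 0 :=
    intermediate_value_Icc zero_le_one (by fun_prop)
      ⟨by simp [hm], by simpa using pow_le_one₀ le_rfl zero_le_one⟩
  refine ⟨a, ⟨ha, sub_eq_zero.mp hroot⟩, fun b ⟨hb, hbroot⟩ => ?_⟩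
  exact (strictMonoOn_pow_sub_one_sub_pow hm n).injOn hb ha (by simp [hbroot, hroot])

theorem mem_Ioo_of_pow_eq_one_sub_pow {a : ℝ} {m n : ℕ} (hm : m ≠ 0) (hn : n ≠ 0)
    (ha : a ∈ Set.Icc 0 1) (h : a ^ m = (1 - a) ^ n) : a ∈ Set.Ioo 0 1 := by
  have ha0 : a ≠ 0 := by rintro rfl; simp [hm] at h
  have ha1 : a ≠ 1 := by rintro rfl; simp [hn] at h
  exact ⟨ha.1.lt_of_ne' ha0, ha.2.lt_of_ne ha1⟩

theorem logb_one_sub_of_pow_eq_one_sub_pow {b a : ℝ} {m n : ℕ} (hn : n ≠ 0)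
    (h : a ^ m = (1 - a) ^ n) : logb b (1 - a) = m / n * logb b a := by
  have hlog := congrArg (logb b) h
  rw [logb_pow, logb_pow] at hlog
  field_simp
  linarith

theorem binaryEntropy_of_pow_eq_one_sub_pow {a : ℝ} {m n : ℕ} (hn : n ≠ 0)
    (h : a ^ m = (1 - a) ^ n) : binaryEntropy a = -(a + m / n * (1 - a)) * logb 2 a := by
  rw [binaryEntropy, logb_one_sub_of_pow_eq_one_sub_pow hn h]
  ring

/-- the equation `x^3 = (1−x)^4` has a unique solution `a` in `[0,1]`;
this `a` lies in `(0,1)` and satisfies `2·H₂(a)/(a+3) = −(1/2)·log₂ a`. -/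
theorem ising_unique_root_and_closed_form :
    (∃! a : ℝ, a ∈ Set.Icc (0 : ℝ) 1 ∧ a ^ 3 = (1 - a) ^ 4) ∧
      ∀ a : ℝ, a ∈ Set.Icc (0 : ℝ) 1 → a ^ 3 = (1 - a) ^ 4 →
        a ∈ Set.Ioo (0 : ℝ) 1 ∧
          2 * binaryEntropy a / (a + 3) = -(1 / 2) * Real.logb 2 a := by
  refine ⟨existsUnique_mem_Icc_pow_eq_one_sub_pow three_ne_zero 4, fun a ha h => ?_⟩
  refine ⟨mem_Ioo_of_pow_eq_one_sub_pow three_ne_zero four_ne_zero ha h, ?_⟩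
  have ha3 : a + 3 ≠ 0 := by linarith [ha.1]
  rw [binaryEntropy_of_pow_eq_one_sub_pow four_ne_zero h]
  field_simp
  ring
end
end
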